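/- (Jacobi expansion theorem for Wronskians) Let f_1, ..., f_k, f be smooth functions of x, let W_k = W[f_1,...,f_k] be the Wronskian determinant, W_{k-1} = W[f_1,...,f_{k-1}], W_{k-1}(f) = W[f_1,...,f_{k-1},f], and W_k(f) = W[f_1,...,f_k,f]. Then, wherever W_k ≠ 0, ∂_x(W_{k-1}(f)/W_k) = W_k(f)·W_{k-1}/W_k². -/

import Mathlib

open Matrix Finset Equiv

/-- The Wronskian determinant `W[F_1,…,F_n](x) = det(∂^{α−1} F_β(x))`. -/
noncomputable def wronskianDet (n : ℕ) (F : Fin n → ℝ → ℝ) (x : ℝ) : ℝ :=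
  (Matrix.of fun i j : Fin n => iteratedDeriv (i : ℕ) (F j) x).det


variable {R : Type*} [CommRing R]

/-- Desnanot–Jacobi identity over an integral domain, assuming `det M ≠ 0`. -/
lemma dj_domain [IsDomain R] {n : ℕ} (M : Matrix (Fin (n + 2)) (Fin (n + 2)) R)
    (hM : M.det ≠ 0) :
    M.det * (M.submatrix (Fin.castAdd 2) (Fin.castAdd 2)).det =
      (M.submatrix (⟨n, by omega⟩ : Fin (n + 2)).succAbove
          (⟨n, by omega⟩ : Fin (n + 2)).succAbove).det *
        (M.submatrix Fin.castSucc Fin.castSucc).det -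
      (M.submatrix Fin.castSucc (⟨n, by omega⟩ : Fin (n + 2)).succAbove).det *
        (M.submatrix (⟨n, by omega⟩ : Fin (n + 2)).succAbove Fin.castSucc).det := by
  classical
  set p : Fin (n + 2) := ⟨n, by omega⟩ with hp
  -- the auxiliary matrix N
  set N : Matrix (Fin (n + 2)) (Fin (n + 2)) R :=
    Matrix.of fun i j => if (j : ℕ) < n then (if i = j then 1 else 0) else M.adjugate i j with hN
  have e := finSumFinEquiv (m := n) (n := 2)
  -- M * N computed entrywise
  have hMN : ∀ i j, (M * N) i j =
      if (j : ℕ) < n then M i j else M.det * (if i = j then 1 else 0) := by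
    intro i j
    by_cases hj : (j : ℕ) < n
    · simp only [mul_apply, hN, of_apply, hj, if_true, mul_ite, mul_one, mul_zero]
      simp [Finset.sum_ite_eq' Finset.univ j (fun k => M i k)]
    · have : (M * N) i j = (M * M.adjugate) i j := by
        simp only [mul_apply, hN, of_apply, hj, if_false]
      rw [this, mul_adjugate]
      simp [hj, Matrix.one_apply]
  -- determinant of M * N
  have hdetMN : (M * N).det =
      (M.submatrix (Fin.castAdd 2) (Fin.castAdd 2)).det * M.det ^ 2 := by
    rw [← det_submatrix_equiv_self finSumFinEquiv (M * N)]
    have : (M * N).submatrix finSumFinEquiv finSumFinEquiv =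
        fromBlocks (M.submatrix (Fin.castAdd 2) (Fin.castAdd 2)) 0
          (M.submatrix (Fin.natAdd n) (Fin.castAdd 2)) (M.det • (1 : Matrix (Fin 2) (Fin 2) R)) := by
      ext i j
      cases i with
      | inl i => cases j with
        | inl j =>
          simp only [submatrix_apply, finSumFinEquiv_apply_left, fromBlocks_apply₁₁]
          rw [hMN]; simp [Fin.castAdd]
        | inr j =>
          simp only [submatrix_apply, finSumFinEquiv_apply_left, finSumFinEquiv_apply_right,
            fromBlocks_apply₁₂]
          rw [hMN]
          have h1 : ¬ ((Fin.natAdd n j : Fin (n+2)) : ℕ) < n := by simp [Fin.natAdd]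
          have h2 : (Fin.castAdd 2 i : Fin (n+2)) ≠ Fin.natAdd n j := by
            intro h
            have := congrArg Fin.val h
            simp [Fin.castAdd, Fin.natAdd] at this
            omega
          simp [h1, h2]
      | inr i => cases j with
        | inl j =>
          simp only [submatrix_apply, finSumFinEquiv_apply_left, finSumFinEquiv_apply_right,
            fromBlocks_apply₂₁]
          rw [hMN]; simp [Fin.castAdd]
        | inr j =>
          simp only [submatrix_apply, finSumFinEquiv_apply_right, fromBlocks_apply₂₂]
          rw [hMN]
          have h1 : ¬ ((Fin.natAdd n j : Fin (n+2)) : ℕ) < n := by simp [Fin.natAdd]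
          have h2 : (Fin.natAdd n i : Fin (n+2)) = Fin.natAdd n j ↔ i = j := by
            constructor
            · intro h
              have := congrArg Fin.val h
              simp [Fin.natAdd] at this
              exact Fin.ext (by omega)
            · rintro rfl; rfl
          simp only [h1, if_false, Matrix.smul_apply, Matrix.one_apply, smul_eq_mul]
          by_cases hij : i = j
          · simp [hij]
          · simp [hij, h2, hij]
    rw [this, det_fromBlocks_zero₁₂]
    have : (M.det • (1 : Matrix (Fin 2) (Fin 2) R)).det = M.det ^ 2 := by
      rw [det_smul, det_one, Fintype.card_fin]; ring
    rw [this]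
  -- determinant of N
  have hdetN : N.det =
      M.adjugate (Fin.natAdd n 0) (Fin.natAdd n 0) * M.adjugate (Fin.natAdd n 1) (Fin.natAdd n 1)
      - M.adjugate (Fin.natAdd n 0) (Fin.natAdd n 1) *
        M.adjugate (Fin.natAdd n 1) (Fin.natAdd n 0) := by
    rw [← det_submatrix_equiv_self finSumFinEquiv N]
    have : N.submatrix finSumFinEquiv finSumFinEquiv =
        fromBlocks 1 (Matrix.of fun i j => M.adjugate (Fin.castAdd 2 i) (Fin.natAdd n j)) 0
          (Matrix.of fun i j => M.adjugate (Fin.natAdd n i) (Fin.natAdd n j)) := by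
      ext i j
      cases i with
      | inl i => cases j with
        | inl j =>
          simp only [submatrix_apply, finSumFinEquiv_apply_left, fromBlocks_apply₁₁, hN, of_apply]
          have h1 : ((Fin.castAdd 2 j : Fin (n+2)) : ℕ) < n := j.isLt
          have h2 : (Fin.castAdd 2 i : Fin (n+2)) = Fin.castAdd 2 j ↔ i = j := by
            constructor
            · intro h; exact Fin.ext (by simpa [Fin.castAdd] using congrArg Fin.val h)
            · rintro rfl; rfl
          simp only [h1, if_true, Matrix.one_apply]
          by_cases hij : i = j
          · simp [hij]
          · simp [hij, h2]
        | inr j =>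
          simp only [submatrix_apply, finSumFinEquiv_apply_left, finSumFinEquiv_apply_right,
            fromBlocks_apply₁₂, hN, of_apply]
          have h1 : ¬ ((Fin.natAdd n j : Fin (n+2)) : ℕ) < n := by simp [Fin.natAdd]
          simp [h1]
      | inr i => cases j with
        | inl j =>
          simp only [submatrix_apply, finSumFinEquiv_apply_left, finSumFinEquiv_apply_right,
            fromBlocks_apply₂₁, hN, of_apply]
          have h1 : ((Fin.castAdd 2 j : Fin (n+2)) : ℕ) < n := j.isLt
          have h2 : (Fin.natAdd n i : Fin (n+2)) ≠ Fin.castAdd 2 j := by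
            intro h
            have := congrArg Fin.val h
            simp [Fin.castAdd, Fin.natAdd] at this
            omega
          simp [h1, h2]
        | inr j =>
          simp only [submatrix_apply, finSumFinEquiv_apply_right, fromBlocks_apply₂₂, hN, of_apply]
          have h1 : ¬ ((Fin.natAdd n j : Fin (n+2)) : ℕ) < n := by simp [Fin.natAdd]
          simp [h1]
    rw [this, det_fromBlocks_zero₂₁, det_one, one_mul, det_fin_two]
    rfl
  have hq0 : (Fin.natAdd n (0 : Fin 2) : Fin (n+2)) = p := by
    apply Fin.ext; simp [Fin.natAdd, hp]
  have hq1 : (Fin.natAdd n (1 : Fin 2) : Fin (n+2)) = Fin.last (n+1) := by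
    apply Fin.ext; simp [Fin.natAdd]
  rw [hq0, hq1, adjugate_fin_succ_eq_det_submatrix, adjugate_fin_succ_eq_det_submatrix,
    adjugate_fin_succ_eq_det_submatrix, adjugate_fin_succ_eq_det_submatrix,
    Fin.succAbove_last] at hdetN
  have hpval : (p : ℕ) = n := rfl
  rw [hpval, Fin.val_last] at hdetN
  have s1 : ((-1:R))^(n+n) = 1 := Even.neg_one_pow ⟨n, by ring⟩
  have s2 : ((-1:R))^((n+1)+(n+1)) = 1 := Even.neg_one_pow ⟨n+1, by ring⟩
  have s3 : ((-1:R))^((n+1)+n) = -1 := Odd.neg_one_pow ⟨n, by ring⟩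
  have s4 : ((-1:R))^(n+(n+1)) = -1 := Odd.neg_one_pow ⟨n, by ring⟩
  rw [s1, s2, s3, s4] at hdetN
  have h1 : M.det * N.det =
      (M.submatrix (Fin.castAdd 2) (Fin.castAdd 2)).det * M.det ^ 2 := by
    rw [← det_mul, hdetMN]
  have h2 : N.det = (M.submatrix (Fin.castAdd 2) (Fin.castAdd 2)).det * M.det :=
    mul_left_cancel₀ hM (by rw [h1]; ring)
  rw [h2] at hdetN
  linear_combination hdetN

open Polynomial in
/-- Desnanot–Jacobi identity over `ℝ`, without invertibility hypotheses. -/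
lemma dj_real {n : ℕ} (M : Matrix (Fin (n + 2)) (Fin (n + 2)) ℝ) :
    M.det * (M.submatrix (Fin.castAdd 2) (Fin.castAdd 2)).det =
      (M.submatrix (⟨n, by omega⟩ : Fin (n + 2)).succAbove
          (⟨n, by omega⟩ : Fin (n + 2)).succAbove).det *
        (M.submatrix Fin.castSucc Fin.castSucc).det -
      (M.submatrix Fin.castSucc (⟨n, by omega⟩ : Fin (n + 2)).succAbove).det *
        (M.submatrix (⟨n, by omega⟩ : Fin (n + 2)).succAbove Fin.castSucc).det := by
  classical
  set P : Matrix (Fin (n + 2)) (Fin (n + 2)) ℝ[X] := charmatrix (-M) with hPdef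
  have hP : P.det ≠ 0 := (Matrix.charpoly_monic (-M)).ne_zero
  have key := dj_domain P hP
  set φ : ℝ[X] →+* ℝ := Polynomial.evalRingHom 0 with hφ
  have hmap : ∀ (k : ℕ) (r c : Fin k → Fin (n + 2)),
      φ ((P.submatrix r c).det) = ((M.submatrix r c).det) := by
    intro k r c
    rw [RingHom.map_det]
    congr 1
    ext i j
    simp only [RingHom.mapMatrix_apply, Matrix.map_apply, submatrix_apply, hPdef, hφ]
    by_cases h : r i = c j
    · rw [h, charmatrix_apply_eq]
      simp
    · rw [charmatrix_apply_ne _ _ _ h]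
      simp
  have hmap' : φ P.det = M.det := by
    have := hmap (n + 2) id id
    simpa using this
  have := congrArg φ key
  rw [_root_.map_mul, _root_.map_sub, _root_.map_mul, _root_.map_mul, hmap', hmap, hmap, hmap, hmap, hmap] at this
  exact this


lemma sum_det_updateRow {n : ℕ} (M V : Matrix (Fin n) (Fin n) ℝ) :
    ∑ i, (M.updateRow i (V i)).det =
      ∑ σ : Equiv.Perm (Fin n), ((Equiv.Perm.sign σ : ℤ) : ℝ) *
        ∑ j, (∏ l ∈ Finset.univ.erase j, M (σ l) l) * V (σ j) j := by
  classical
  simp only [det_apply']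
  rw [Finset.sum_comm]
  refine Finset.sum_congr rfl fun σ _ => ?_
  rw [Finset.mul_sum]
  rw [← Equiv.sum_comp σ (fun i => ((Equiv.Perm.sign σ : ℤ) : ℝ) *
      ∏ j, (M.updateRow i (V i)) (σ j) j)]
  refine Finset.sum_congr rfl fun j _ => ?_
  congr 1
  -- ∏ l, updateRow M (σ j) (V (σ j)) (σ l) l = (∏ l ∈ univ.erase j, M (σ l) l) * V (σ j) j
  rw [← Finset.mul_prod_erase Finset.univ _ (Finset.mem_univ j)]
  rw [mul_comm]
  congr 1
  · refine Finset.prod_congr rfl fun l hl => ?_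
    have hl' : σ l ≠ σ j := fun h => (Finset.mem_erase.mp hl).1 (σ.injective h)
    rw [Matrix.updateRow_apply, if_neg hl']
  · rw [Matrix.updateRow_apply, if_pos rfl]

lemma hasDerivAt_det {n : ℕ} {A : ℝ → Matrix (Fin n) (Fin n) ℝ}
    {A' : Matrix (Fin n) (Fin n) ℝ} {x : ℝ}
    (h : ∀ i j, HasDerivAt (fun y => A y i j) (A' i j) x) :
    HasDerivAt (fun y => (A y).det) (∑ i, ((A x).updateRow i (A' i)).det) x := by
  classical
  have main : HasDerivAt (fun y => (A y).det)
      (∑ σ : Equiv.Perm (Fin n), ((Equiv.Perm.sign σ : ℤ) : ℝ) *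
        ∑ j, (∏ l ∈ Finset.univ.erase j, A x (σ l) l) * A' (σ j) j) x := by
    simp only [det_apply']
    refine HasDerivAt.fun_sum fun σ _ => ?_
    have hp : HasDerivAt (fun y => ∏ j, A y (σ j) j)
        (∑ j, (∏ l ∈ Finset.univ.erase j, A x (σ l) l) • A' (σ j) j) x :=
      HasDerivAt.fun_finset_prod fun j _ => h (σ j) j
    simpa [smul_eq_mul] using hp.const_mul (((Equiv.Perm.sign σ : ℤ) : ℝ))
  rw [sum_det_updateRow]
  exact main




lemma hasDerivAt_iteratedDeriv {f : ℝ → ℝ} (hf : ContDiff ℝ (⊤ : ℕ∞) f) (i : ℕ) (x : ℝ) :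
    HasDerivAt (iteratedDeriv i f) (iteratedDeriv (i + 1) f x) x := by
  have h1 : ContDiff ℝ (⊤ : ℕ∞) f := hf.of_le (by simp)
  have h2 := (contDiff_iff_iteratedDeriv.mp h1).2 i (by exact_mod_cast WithTop.coe_lt_top i)
  have h3 := (h2 x).hasDerivAt
  rwa [← iteratedDeriv_succ] at h3

lemma hasDerivAt_wronskian {n : ℕ} (F : Fin (n + 1) → ℝ → ℝ)
    (hF : ∀ j, ContDiff ℝ (⊤ : ℕ∞) (F j)) (x : ℝ) :
    HasDerivAt (wronskianDet (n + 1) F)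
      ((Matrix.of fun i j : Fin (n + 1) =>
        iteratedDeriv (if i = Fin.last n then n + 1 else (i : ℕ)) (F j) x).det) x := by
  classical
  have h := hasDerivAt_det
    (A := fun y => Matrix.of fun i j : Fin (n + 1) => iteratedDeriv (i : ℕ) (F j) y)
    (A' := Matrix.of fun i j : Fin (n + 1) => iteratedDeriv ((i : ℕ) + 1) (F j) x) (x := x)
    (fun i j => hasDerivAt_iteratedDeriv (hF j) i x)
  have hval : (∑ i, (((Matrix.of fun i j : Fin (n + 1) =>
        iteratedDeriv (i : ℕ) (F j) x)).updateRow i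
          ((Matrix.of fun i j : Fin (n + 1) => iteratedDeriv ((i : ℕ) + 1) (F j) x) i)).det) =
      (Matrix.of fun i j : Fin (n + 1) =>
        iteratedDeriv (if i = Fin.last n then n + 1 else (i : ℕ)) (F j) x).det := by
    rw [Finset.sum_eq_single (Fin.last n)]
    · congr 1
      ext i j
      by_cases hi : i = Fin.last n
      · subst hi
        simp [Matrix.updateRow_self]
      · rw [Matrix.updateRow_ne hi]
        simp [hi]
    · intro i _ hi
      have hlt : (i : ℕ) < n :=
        lt_of_le_of_ne (Nat.lt_succ_iff.mp i.isLt) (fun h => hi (Fin.ext (by simp [h])))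
      have hrow : ((Matrix.of fun i j : Fin (n + 1) =>
          iteratedDeriv ((i : ℕ) + 1) (F j) x) i) =
          (Matrix.of fun i j : Fin (n + 1) => iteratedDeriv (i : ℕ) (F j) x)
            (⟨(i : ℕ) + 1, by omega⟩ : Fin (n + 1)) := by
        funext j; rfl
      rw [hrow]
      exact det_updateRow_eq_zero (by
        intro h
        have := congrArg Fin.val h
        simp at this)
    · simp
  rw [← hval]
  exact h

/-- **Jacobi expansion theorem for Wronskians.** Let `f_1, …, f_k, g` be smooth
(`k = m+1 ≥ 1`), `W_k = W[f_1,…,f_k]`, `W_{k-1} = W[f_1,…,f_{k-1}]`,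
`W_{k-1}(g) = W[f_1,…,f_{k-1},g]`, `W_k(g) = W[f_1,…,f_k,g]`.  Wherever `W_k ≠ 0`,
`∂ₓ(W_{k-1}(g)/W_k) = W_k(g)·W_{k-1}/W_k²`. -/
theorem jacobi_wronskian (m : ℕ) (f : Fin (m + 1) → ℝ → ℝ) (g : ℝ → ℝ)
    (hf : ∀ i, ContDiff ℝ (⊤ : ℕ∞) (f i)) (hg : ContDiff ℝ (⊤ : ℕ∞) g)
    (x : ℝ) (hW : wronskianDet (m + 1) f x ≠ 0) :
    deriv (fun y =>
        wronskianDet (m + 1) (Fin.snoc (fun i : Fin m => f i.castSucc) g) y /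
          wronskianDet (m + 1) f y) x =
      wronskianDet (m + 2) (Fin.snoc f g) x *
        wronskianDet m (fun i : Fin m => f i.castSucc) x /
        (wronskianDet (m + 1) f x) ^ 2 := by
  classical
  set p : Fin (m + 2) := ⟨m, by omega⟩ with hp
  set Mb : Matrix (Fin (m + 2)) (Fin (m + 2)) ℝ :=
    Matrix.of fun i j : Fin (m + 2) => iteratedDeriv (i : ℕ) ((Fin.snoc f g : Fin (m + 2) → ℝ → ℝ) j) x with hMb
  -- index facts
  have hpa1 : ∀ j : Fin (m + 1), (j : ℕ) < m → p.succAbove j = Fin.castSucc j := by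
    intro j hj
    exact Fin.succAbove_of_castSucc_lt _ _ (by simp [Fin.lt_def, hp, hj])
  have hpa2 : p.succAbove (Fin.last m) = Fin.last (m + 1) := by
    rw [Fin.succAbove_of_le_castSucc _ _ (by simp [Fin.le_def, hp])]
    rfl
  -- smoothness of the snoc family
  have hsm : ∀ j, ContDiff ℝ (⊤ : ℕ∞) ((Fin.snoc (fun i : Fin m => f i.castSucc) g : Fin (m+1) → ℝ → ℝ) j) := by
    intro j
    refine Fin.lastCases ?_ ?_ j
    · simpa using hg
    · intro i; simpa using hf i.castSucc
  -- the two derivatives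
  have h1 := hasDerivAt_wronskian f hf x
  have h2 := hasDerivAt_wronskian (Fin.snoc (fun i : Fin m => f i.castSucc) g) hsm x
  have hdiv := h2.div h1 hW
  rw [show deriv (fun y => wronskianDet (m + 1) (Fin.snoc (fun i : Fin m => f i.castSucc) g) y /
      wronskianDet (m + 1) f y) x = _ from hdiv.deriv]
  -- identifications
  have hWf : wronskianDet (m + 1) f x = (Mb.submatrix Fin.castSucc Fin.castSucc).det := by
    unfold wronskianDet
    congr 1
    ext i j
    simp [hMb, Fin.snoc_castSucc]
  have hWg : wronskianDet (m + 1) (Fin.snoc (fun i : Fin m => f i.castSucc) g) x =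
      (Mb.submatrix Fin.castSucc p.succAbove).det := by
    unfold wronskianDet
    congr 1
    ext i j
    refine Fin.lastCases ?_ ?_ j
    · simp [hMb, hpa2, Fin.snoc_last]
    · intro j'
      have : p.succAbove (Fin.castSucc j') = Fin.castSucc (Fin.castSucc j') :=
        hpa1 _ (by simp)
      simp [hMb, this, Fin.snoc_castSucc]
  have hd1 : (Matrix.of fun i j : Fin (m + 1) =>
      iteratedDeriv (if i = Fin.last m then m + 1 else (i : ℕ)) (f j) x).det =
      (Mb.submatrix p.succAbove Fin.castSucc).det := by
    congr 1
    ext i j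
    refine Fin.lastCases ?_ ?_ i
    · simp [hMb, hpa2, Fin.snoc_castSucc]
    · intro i'
      have h1' : p.succAbove (Fin.castSucc i') = Fin.castSucc (Fin.castSucc i') :=
        hpa1 _ (by simp)
      have h2' : (Fin.castSucc i') ≠ Fin.last m := (Fin.castSucc_lt_last i').ne
      simp [hMb, h1', h2', Fin.snoc_castSucc]
  have hd2 : (Matrix.of fun i j : Fin (m + 1) =>
      iteratedDeriv (if i = Fin.last m then m + 1 else (i : ℕ))
        ((Fin.snoc (fun i : Fin m => f i.castSucc) g : Fin (m+1) → ℝ → ℝ) j) x).det =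
      (Mb.submatrix p.succAbove p.succAbove).det := by
    congr 1
    ext i j
    have hcol : ((Fin.snoc (fun i : Fin m => f i.castSucc) g : Fin (m+1) → ℝ → ℝ) j) =
        (Fin.snoc f g : Fin (m+2) → ℝ → ℝ) (p.succAbove j) := by
      refine Fin.lastCases ?_ ?_ j
      · simp [hpa2, Fin.snoc_last]
      · intro j'
        have : p.succAbove (Fin.castSucc j') = Fin.castSucc (Fin.castSucc j') :=
          hpa1 _ (by simp)
        simp [this, Fin.snoc_castSucc]
    simp only [Matrix.of_apply, Matrix.submatrix_apply, hMb]
    rw [hcol]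
    refine Fin.lastCases ?_ ?_ i
    · simp [hMb, hpa2]
    · intro i'
      have h1' : p.succAbove (Fin.castSucc i') = Fin.castSucc (Fin.castSucc i') :=
        hpa1 _ (by simp)
      have h2' : (Fin.castSucc i') ≠ Fin.last m := (Fin.castSucc_lt_last i').ne
      simp [hMb, h1', h2']
  have hbig : wronskianDet (m + 2) (Fin.snoc f g) x = Mb.det := rfl
  have hinner : wronskianDet m (fun i : Fin m => f i.castSucc) x =
      (Mb.submatrix (Fin.castAdd 2) (Fin.castAdd 2)).det := by
    unfold wronskianDet
    congr 1
    ext i j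
    have hc : (Fin.castAdd 2 j : Fin (m + 2)) = Fin.castSucc (Fin.castSucc j) := rfl
    simp [hMb, hc, Fin.snoc_castSucc]
  rw [hd1, hd2, hWf, hWg, hbig, hinner]
  rw [← dj_real Mb]
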